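/- Let X be a connected partial groupoid with X_1 finite. If X has dimension p(X), then X is a groupoid, i.e., 𝓔_T : X_n → lim_T X is a bijection for every n ≥ 1 and every spine T of [n]. -/

import Mathlib

/-- A symmetric (simplicial) set: a functor `Υᵒᵖ → Set`, where `Υ` has objects
`[n] = {0,…,n}` (encoded as `Fin (n+1)`) and all functions as morphisms.
For `α : [m] → [n]` and `x ∈ X_n`, `act α x` is `x · α ∈ X_m`. -/
structure SymSet where
  obj : ℕ → Type
  act : ∀ {m n : ℕ}, (Fin (m + 1) → Fin (n + 1)) → obj n → obj m
  act_id : ∀ {n : ℕ} (x : obj n), act id x = x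
  act_comp : ∀ {m n k : ℕ} (α : Fin (m + 1) → Fin (n + 1)) (β : Fin (n + 1) → Fin (k + 1))
      (x : obj k), act α (act β x) = act (β ∘ α) x

namespace SymSet

/-- `x_{ij} ∈ X_1`, the action on `x ∈ X_n` of the map `[1] → [n]` with `0 ↦ i`, `1 ↦ j`. -/
def edge (X : SymSet) {n : ℕ} (i j : Fin (n + 1)) (x : X.obj n) : X.obj 1 :=
  X.act (fun t : Fin 2 => if t = 0 then i else j) x

/-- The domain of an edge, its image under `ι₀ : [0] → [1]`, `0 ↦ 0`. -/
def edgeDom (X : SymSet) (f : X.obj 1) : X.obj 0 :=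
  X.act (fun _ : Fin 1 => (0 : Fin 2)) f

/-- The codomain of an edge, its image under `ι₁ : [0] → [1]`, `0 ↦ 1`. -/
def edgeCod (X : SymSet) (f : X.obj 1) : X.obj 0 :=
  X.act (fun _ : Fin 1 => (1 : Fin 2)) f

/-- The identity edge `id_a` on an object `a ∈ X_0`, induced by the unique map `[1] → [0]`. -/
def identityEdge (X : SymSet) (a : X.obj 0) : X.obj 1 :=
  X.act (fun _ : Fin 2 => (0 : Fin 1)) a

/-- An edge is an identity if it is in the image of `X_0 → X_1`. -/
def IsIdentityEdge (X : SymSet) (f : X.obj 1) : Prop :=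
  ∃ a : X.obj 0, f = X.identityEdge a

/-- The tuple of edges `x_{ij}` (for `i < j` an edge `{i,j}` of the spine `T`)
associated to an `n`-simplex `x`. -/
def spineTuple (X : SymSet) {n : ℕ} (T : SimpleGraph (Fin (n + 1))) (x : X.obj n) :
    ∀ i j : Fin (n + 1), i < j → T.Adj i j → X.obj 1 :=
  fun i j _ _ => X.edge i j x

/-- Membership in `lim_T X`: the components have matching endpoints. -/
def IsSpineLim (X : SymSet) {n : ℕ} (T : SimpleGraph (Fin (n + 1)))
    (e : ∀ i j : Fin (n + 1), i < j → T.Adj i j → X.obj 1) : Prop :=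
  ∃ v : Fin (n + 1) → X.obj 0, ∀ (i j : Fin (n + 1)) (hlt : i < j) (h : T.Adj i j),
    X.edgeDom (e i j hlt h) = v i ∧ X.edgeCod (e i j hlt h) = v j

/-- The limit `lim_T X` of the diagram associated to a spine `T`. -/
def SpineLim (X : SymSet) {n : ℕ} (T : SimpleGraph (Fin (n + 1))) : Type :=
  { e : ∀ i j : Fin (n + 1), i < j → T.Adj i j → X.obj 1 // X.IsSpineLim T e }

lemma spineTuple_isSpineLim (X : SymSet) {n : ℕ} (T : SimpleGraph (Fin (n + 1)))
    (x : X.obj n) : X.IsSpineLim T (X.spineTuple T x) := by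
  refine ⟨fun i => X.act (fun _ : Fin 1 => i) x, fun i j hlt h => ⟨?_, ?_⟩⟩
  · show X.act _ (X.act _ x) = _
    rw [X.act_comp]
    show X.act ((fun t : Fin 2 => if t = 0 then i else j) ∘ fun _ : Fin 1 => 0) x
      = X.act (fun _ : Fin 1 => i) x
    congr 1
  · show X.act _ (X.act _ x) = _
    rw [X.act_comp]
    show X.act ((fun t : Fin 2 => if t = 0 then i else j) ∘ fun _ : Fin 1 => 1) x
      = X.act (fun _ : Fin 1 => j) x
    congr 1

/-- The map `𝓔_T : X_n → lim_T X`. -/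
def spineMap (X : SymSet) {n : ℕ} (T : SimpleGraph (Fin (n + 1))) (x : X.obj n) :
    X.SpineLim T :=
  ⟨X.spineTuple T x, X.spineTuple_isSpineLim T x⟩

/-- A symmetric set is *spiny* if `𝓔_T` is injective for every `n ≥ 1` and
every spine `T` of `[n]` (a tree with vertex set `[n]`). -/
def Spiny (X : SymSet) : Prop :=
  ∀ n : ℕ, 1 ≤ n → ∀ T : SimpleGraph (Fin (n + 1)), T.IsTree →
    Function.Injective (X.spineMap T)

/-- An element `x ∈ X_n` is degenerate if `x = y · σ` for some noninvertible
surjection `σ : [n] → [k]`. -/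
def Degenerate (X : SymSet) {n : ℕ} (x : X.obj n) : Prop :=
  ∃ (k : ℕ) (σ : Fin (n + 1) → Fin (k + 1)) (y : X.obj k),
    Function.Surjective σ ∧ ¬ Function.Bijective σ ∧ x = X.act σ y

/-- A symmetric subset (subfunctor) of `X`. -/
structure SymSubset (X : SymSet) where
  carrier : ∀ n : ℕ, Set (X.obj n)
  act_mem : ∀ {m n : ℕ} (α : Fin (m + 1) → Fin (n + 1)) {x : X.obj n},
    x ∈ carrier n → X.act α x ∈ carrier m

/-- `X` is `n`-skeletal: the smallest symmetric subset of `X` containing all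
of its `n`-simplices is all of `X`. -/
def IsSkeletal (X : SymSet) (n : ℕ) : Prop :=
  ∀ Y : SymSubset X, (∀ x : X.obj n, x ∈ Y.carrier n) →
    ∀ (m : ℕ) (x : X.obj m), x ∈ Y.carrier m

/-- `X` has dimension `n`: it is `n`-skeletal but not `k`-skeletal for `k < n`
(for `n ≥ 1` this is equivalent to not being `(n-1)`-skeletal). -/
def HasDim (X : SymSet) (n : ℕ) : Prop :=
  X.IsSkeletal n ∧ ∀ k : ℕ, k < n → ¬ X.IsSkeletal k

/-- Two objects are related if there is an edge between them (in either direction). -/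
def EdgeRel (X : SymSet) (a b : X.obj 0) : Prop :=
  ∃ f : X.obj 1, (X.edgeDom f = a ∧ X.edgeCod f = b) ∨ (X.edgeDom f = b ∧ X.edgeCod f = a)

/-- `X` is connected: it is nonempty and any two objects are joined by a
zig-zag of edges. -/
def Connected (X : SymSet) : Prop :=
  Nonempty (X.obj 0) ∧ ∀ a b : X.obj 0, Relation.ReflTransGen X.EdgeRel a b

/-- `n_a`: the number of nonidentity edges with domain `a`. -/
noncomputable def nEdges (X : SymSet) (a : X.obj 0) : ℕ :=
  Nat.card { f : X.obj 1 // X.edgeDom f = a ∧ ¬ X.IsIdentityEdge f }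

/-- `p(X)`: the maximum of the `n_a` over all objects `a`. -/
noncomputable def pVal (X : SymSet) : ℕ := ⨆ a : X.obj 0, X.nEdges a

/-- A map of symmetric sets (a natural transformation). -/
structure SymMap (X Y : SymSet) where
  app : ∀ n : ℕ, X.obj n → Y.obj n
  naturality : ∀ {m n : ℕ} (α : Fin (m + 1) → Fin (n + 1)) (x : X.obj n),
    app m (X.act α x) = Y.act α (app n x)

/-- A map of symmetric sets is an isomorphism iff it is levelwise bijective. -/
def SymMap.IsIso {X Y : SymSet} (F : SymMap X Y) : Prop :=
  ∀ n : ℕ, Function.Bijective (F.app n)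

/-- `X` and `Y` are isomorphic symmetric sets. -/
def Isomorphic (X Y : SymSet) : Prop := ∃ F : SymMap X Y, F.IsIso

/-- The Bousfield–Segal map `𝓑_m : X_m → X_1^m`, `x ↦ (x_{01}, x_{02}, …, x_{0m})`. -/
def bousfield (X : SymSet) {m : ℕ} (x : X.obj m) : Fin m → X.obj 1 :=
  fun i => X.edge 0 i.succ x

/-- `X` is spiny in degrees below `q`: `𝓔_T` is injective for every spine `T`
of `[n]` for each `1 ≤ n ≤ q`. -/
def SpinyBelow (X : SymSet) (q : ℕ) : Prop :=
  ∀ n : ℕ, 1 ≤ n → n ≤ q → ∀ T : SimpleGraph (Fin (n + 1)), T.IsTree →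
    Function.Injective (X.spineMap T)

/-- `X` is a groupoid: `𝓔_T : X_n → lim_T X` is a bijection for every `n ≥ 1`
and every spine `T` of `[n]`. -/
def IsGroupoid (X : SymSet) : Prop :=
  ∀ n : ℕ, 1 ≤ n → ∀ T : SimpleGraph (Fin (n + 1)), T.IsTree →
    Function.Bijective (X.spineMap T)

/-- `X` is reduced: `X_0` is a singleton. -/
def Reduced (X : SymSet) : Prop := Nonempty (X.obj 0) ∧ Subsingleton (X.obj 0)

/-- A partial group is a reduced spiny symmetric set. -/
def IsPartialGroup (X : SymSet) : Prop := X.Reduced ∧ X.Spiny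

/-- The levelwise product of two symmetric sets. -/
def prod (X Y : SymSet) : SymSet where
  obj n := X.obj n × Y.obj n
  act α p := (X.act α p.1, Y.act α p.2)
  act_id p := by cases p with | mk a b => simp only [X.act_id, Y.act_id]
  act_comp α β p := by cases p with | mk a b => simp only [X.act_comp, Y.act_comp]

end SymSet

/-!
If `p(X) = 0`, every edge is an identity. Otherwise `X` has a nondegenerate `p(X)`-simplex `z`;
by spininess its `p(X)` nonidentity edges out of the vertex `z₀` are distinct, hence they are all
the nonidentity edges out of `z₀`. Swapping vertices moves `z` along any of these edges, so by
connectedness every object is the vertex `0` of such a simplex. Pulling it back along a suitable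
map `[n] → [p(X)]` realizes any family of edges out of an object as the edges of an `n`-simplex at
one vertex, and attaching the leaves of a tree one at a time then fills every spine.
-/

theorem SimpleGraph.IsTree.comap_succAbove {n : ℕ} {T : SimpleGraph (Fin (n + 2))}
    (hT : T.IsTree) {l : Fin (n + 2)} [Fintype (T.neighborSet l)] (hl : T.degree l = 1) :
    (T.comap l.succAbove).IsTree := by
  have e : T.comap l.succAbove ≃g T.induce {l}ᶜ :=
    { finSuccAboveEquiv l with map_rel_iff' := Iff.rfl }
  refine ⟨e.connected_iff.mpr (hT.connected.induce_compl_singleton_of_degree_eq_one hl), ?_⟩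
  exact hT.isAcyclic.comap ⟨l.succAbove, id⟩ Fin.succAbove_right_injective

namespace SymSet

def vert (X : SymSet) {n : ℕ} (i : Fin (n + 1)) (x : X.obj n) : X.obj 0 :=
  X.act (fun _ => i) x

def rev (X : SymSet) (f : X.obj 1) : X.obj 1 :=
  X.edge 1 0 f

variable {X : SymSet}

theorem act_act_of_comp_eq {m n k : ℕ} {α : Fin (m + 1) → Fin (n + 1)}
    {β : Fin (n + 1) → Fin (k + 1)} {γ : Fin (m + 1) → Fin (k + 1)} (h : β ∘ α = γ)
    (x : X.obj k) : X.act α (X.act β x) = X.act γ x := by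
  rw [X.act_comp, h]

theorem edge_act {m n : ℕ} (α : Fin (m + 1) → Fin (n + 1)) (i j : Fin (m + 1))
    (x : X.obj n) : X.edge i j (X.act α x) = X.edge (α i) (α j) x :=
  act_act_of_comp_eq (by funext t; by_cases ht : t = 0 <;> simp [ht]) x

theorem vert_act {m n : ℕ} (α : Fin (m + 1) → Fin (n + 1)) (i : Fin (m + 1)) (x : X.obj n) :
    X.vert i (X.act α x) = X.vert (α i) x :=
  act_act_of_comp_eq rfl x

theorem edgeDom_edge {n : ℕ} (i j : Fin (n + 1)) (x : X.obj n) :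
    X.edgeDom (X.edge i j x) = X.vert i x :=
  act_act_of_comp_eq rfl x

theorem edgeCod_edge {n : ℕ} (i j : Fin (n + 1)) (x : X.obj n) :
    X.edgeCod (X.edge i j x) = X.vert j x :=
  act_act_of_comp_eq rfl x

theorem edge_self {n : ℕ} (i : Fin (n + 1)) (x : X.obj n) :
    X.edge i i x = X.identityEdge (X.vert i x) :=
  (act_act_of_comp_eq (by funext t; simp) x).symm

theorem edge_zero_one (f : X.obj 1) : X.edge 0 1 f = f := by
  unfold edge
  convert X.act_id f using 2
  funext t
  fin_cases t <;> rfl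

theorem vert_obj_zero (i : Fin 1) (a : X.obj 0) : X.vert i a = a := by
  unfold vert
  convert X.act_id a using 2

theorem rev_edge {n : ℕ} (i j : Fin (n + 1)) (x : X.obj n) :
    X.rev (X.edge i j x) = X.edge j i x :=
  edge_act _ 1 0 x

theorem rev_rev (f : X.obj 1) : X.rev (X.rev f) = f := by
  show X.rev (X.edge 1 0 f) = f
  rw [rev_edge, edge_zero_one]

theorem edgeDom_rev (f : X.obj 1) : X.edgeDom (X.rev f) = X.edgeCod f :=
  edgeDom_edge 1 0 f

theorem edgeCod_rev (f : X.obj 1) : X.edgeCod (X.rev f) = X.edgeDom f :=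
  edgeCod_edge 1 0 f

theorem edgeDom_identityEdge (a : X.obj 0) : X.edgeDom (X.identityEdge a) = a := by
  rw [edgeDom, identityEdge,
    act_act_of_comp_eq (funext fun _ => Subsingleton.elim (α := Fin 1) _ _), X.act_id]

theorem identityEdge_injective : Function.Injective X.identityEdge :=
  Function.LeftInverse.injective edgeDom_identityEdge

theorem IsIdentityEdge.eq_identityEdge {f : X.obj 1} (h : X.IsIdentityEdge f) :
    f = X.identityEdge (X.edgeDom f) := by
  obtain ⟨a, rfl⟩ := h
  rw [edgeDom_identityEdge]

theorem Spiny.ext_edge (hX : X.Spiny) {n : ℕ} (c : Fin (n + 1)) {x y : X.obj n}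
    (h : ∀ j, X.edge c j x = X.edge c j y) : x = y := by
  rcases n with _ | n
  · have hc := identityEdge_injective (by simpa only [edge_self] using h c)
    rwa [vert_obj_zero, vert_obj_zero] at hc
  refine hX (n + 1) n.succ_pos (SimpleGraph.starGraph c) (SimpleGraph.isTree_starGraph c)
    (Subtype.ext (funext fun i => funext fun j => funext fun _ => funext fun hij => ?_))
  show X.edge i j x = X.edge i j y
  rcases SimpleGraph.starGraph_adj.mp hij with ⟨-, rfl | rfl⟩
  · exact h j
  · rw [← rev_edge, h, rev_edge]

theorem isSkeletal_iff {k : ℕ} :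
    X.IsSkeletal k ↔ ∀ (m : ℕ) (x : X.obj m), ∃ (α : Fin (m + 1) → Fin (k + 1)) (y : X.obj k),
      x = X.act α y := by
  refine ⟨fun h => h ⟨fun m => {x | ∃ α y, x = X.act α y}, ?_⟩ fun y => ⟨id, y, ?_⟩,
    fun h Y hY m x => ?_⟩
  · rintro m n α x ⟨β, y, rfl⟩
    exact ⟨β ∘ α, y, X.act_comp α β y⟩
  · exact (X.act_id y).symm
  · obtain ⟨α, y, rfl⟩ := h m x
    exact Y.act_mem α (hY y)

def NonDeg {n : ℕ} (z : X.obj (n + 1)) : Prop :=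
  ∀ (α : Fin (n + 2) → Fin (n + 1)) (y : X.obj n), z ≠ X.act α y

theorem exists_nonDeg_of_isSkeletal {q : ℕ} (h : X.IsSkeletal (q + 1)) (hq : ¬ X.IsSkeletal q) :
    ∃ z : X.obj (q + 1), NonDeg z := by
  by_contra! hdeg
  refine hq (isSkeletal_iff.mpr fun m x => ?_)
  obtain ⟨α, z, rfl⟩ := isSkeletal_iff.mp h m x
  have : ¬ NonDeg z := hdeg z
  simp only [NonDeg, not_forall, not_not] at this
  obtain ⟨β, y, rfl⟩ := this
  exact ⟨β ∘ α, y, X.act_comp α β y⟩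

namespace NonDeg

variable {n : ℕ} {z : X.obj (n + 1)}

theorem surjective_of_act_eq (hz : NonDeg z) {σ : Fin (n + 2) → Fin (n + 2)}
    (h : X.act σ z = z) : σ.Surjective := by
  intro t
  by_contra! ht
  choose ρ hρ using fun k => Fin.exists_succAbove_eq (ht k)
  exact hz ρ (X.act t.succAbove z) (by rw [act_act_of_comp_eq (funext hρ), h])

theorem act_perm (hz : NonDeg z) (π : Equiv.Perm (Fin (n + 2))) : NonDeg (X.act π z) := by
  intro α y h
  refine hz (α ∘ π.symm) y ?_
  rw [← X.act_comp, ← h, act_act_of_comp_eq (π.self_comp_symm), X.act_id]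

/-- Two equal edges at vertex `0` would let `z` factor through the map collapsing them. -/
theorem edge_injective (hX : X.Spiny) (hz : NonDeg z) :
    Function.Injective fun j => X.edge 0 j z := by
  have key : ∀ i j, j ≠ 0 → X.edge 0 i z = X.edge 0 j z → i = j := by
    intro i j hj hij
    have hσ : X.act (Function.update id j i) z = z := hX.ext_edge 0 fun k => by
      rw [edge_act, Function.update_of_ne hj.symm, id_eq]
      rcases eq_or_ne k j with rfl | hk
      · rw [Function.update_self, hij]
      · rw [Function.update_of_ne hk, id_eq]
    obtain ⟨k, hk⟩ := hz.surjective_of_act_eq hσ j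
    rcases eq_or_ne k j with rfl | hkj
    · simpa using hk
    · simp [hkj] at hk
  intro i j hij
  rcases eq_or_ne j 0 with rfl | hj
  · rcases eq_or_ne i 0 with rfl | hi
    · rfl
    · exact (key 0 i hi hij.symm).symm
  · exact key i j hj hij

theorem not_isIdentityEdge_edge (hX : X.Spiny) (hz : NonDeg z) {j : Fin (n + 2)} (hj : j ≠ 0) :
    ¬ X.IsIdentityEdge (X.edge 0 j z) := by
  intro hid
  refine hj (hz.edge_injective hX ?_)
  change X.edge 0 j z = X.edge 0 0 z
  rw [hid.eq_identityEdge, edgeDom_edge, edge_self]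

end NonDeg

def StarSurjective {n : ℕ} (z : X.obj n) : Prop :=
  ∀ f : X.obj 1, X.edgeDom f = X.vert 0 z → ∃ j, X.edge 0 j z = f

theorem starSurjective_of_forall_not_isIdentityEdge {n : ℕ} {z : X.obj n}
    (h : ∀ f : X.obj 1, X.edgeDom f = X.vert 0 z → ¬ X.IsIdentityEdge f → ∃ j, X.edge 0 j z = f) :
    StarSurjective z := by
  intro f hf
  by_cases hid : X.IsIdentityEdge f
  · exact ⟨0, by rw [edge_self, hid.eq_identityEdge, hf]⟩
  · exact h f hf hid

theorem nEdges_le_pVal (hfin : Finite (X.obj 1)) (a : X.obj 0) : X.nEdges a ≤ X.pVal :=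
  have : Finite (X.obj 0) := Finite.of_injective _ identityEdge_injective
  le_ciSup (Set.finite_range _).bddAbove a

theorem starSurjective_of_nEdges_eq_zero (hfin : Finite (X.obj 1)) {a : X.obj 0}
    (ha : X.nEdges a = 0) : StarSurjective a := by
  refine starSurjective_of_forall_not_isIdentityEdge fun f hf hid => ?_
  rw [vert_obj_zero] at hf
  have : IsEmpty { f : X.obj 1 // X.edgeDom f = a ∧ ¬ X.IsIdentityEdge f } :=
    (Nat.card_eq_zero.mp ha).resolve_right (not_infinite_iff_finite.mpr Subtype.finite)
  exact this.elim ⟨f, hf, hid⟩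

/-- The `n + 1` nonidentity edges of `z` at vertex `0` are distinct, so when there are at most
`n + 1` nonidentity edges out of that vertex they are all of them. -/
theorem NonDeg.starSurjective (hX : X.Spiny) (hfin : Finite (X.obj 1)) {n : ℕ}
    {z : X.obj (n + 1)} (hz : NonDeg z) (hcard : X.nEdges (X.vert 0 z) ≤ n + 1) :
    StarSurjective z := by
  refine starSurjective_of_forall_not_isIdentityEdge fun f hf hid => ?_
  let φ : Fin (n + 1) → { f : X.obj 1 // X.edgeDom f = X.vert 0 z ∧ ¬ X.IsIdentityEdge f } :=
    fun k => ⟨X.edge 0 k.succ z, edgeDom_edge _ _ _,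
      hz.not_isIdentityEdge_edge hX (Fin.succ_ne_zero k)⟩
  have hφ : φ.Injective := fun k k' h =>
    Fin.succ_injective _ (hz.edge_injective hX (congrArg Subtype.val h))
  have : Finite { f : X.obj 1 // X.edgeDom f = X.vert 0 z ∧ ¬ X.IsIdentityEdge f } :=
    Subtype.finite
  obtain ⟨k, hk⟩ := (hφ.bijective_of_nat_card_le (by simpa [nEdges] using hcard)).2 ⟨f, hf, hid⟩
  exact ⟨k.succ, congrArg Subtype.val hk⟩

theorem NonDeg.exists_nonDeg_vert_eq_edgeCod {n : ℕ} {z : X.obj (n + 1)} (hz : NonDeg z)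
    (hs : StarSurjective z) {f : X.obj 1} (hf : X.edgeDom f = X.vert 0 z) :
    ∃ z' : X.obj (n + 1), NonDeg z' ∧ X.vert 0 z' = X.edgeCod f := by
  obtain ⟨j, rfl⟩ := hs f hf
  refine ⟨X.act (Equiv.swap 0 j) z, hz.act_perm _, ?_⟩
  rw [vert_act, Equiv.swap_apply_left, edgeCod_edge]

theorem exists_nonDeg_vert_eq (hX : X.Spiny) (hconn : X.Connected) (hfin : Finite (X.obj 1))
    {n : ℕ} (hp : ∀ a, X.nEdges a ≤ n + 1) {z : X.obj (n + 1)} (hz : NonDeg z) (a : X.obj 0) :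
    ∃ z' : X.obj (n + 1), NonDeg z' ∧ X.vert 0 z' = a := by
  induction hconn.2 (X.vert 0 z) a with
  | refl => exact ⟨z, hz, rfl⟩
  | tail _ hbc ih =>
    obtain ⟨z', hz', hz'b⟩ := ih
    have hs := hz'.starSurjective hX hfin (hp _)
    obtain ⟨f, ⟨hfb, rfl⟩ | ⟨rfl, hfb⟩⟩ := hbc
    · exact hz'.exists_nonDeg_vert_eq_edgeCod hs (hfb.trans hz'b.symm)
    · rw [← edgeCod_rev]
      exact hz'.exists_nonDeg_vert_eq_edgeCod hs (by rw [edgeDom_rev, hfb, hz'b])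

theorem exists_starSurjective (hX : X.Spiny) (hconn : X.Connected) (hfin : Finite (X.obj 1))
    (hdim : X.HasDim X.pVal) (a : X.obj 0) :
    ∃ (n : ℕ) (z : X.obj n), X.vert 0 z = a ∧ StarSurjective z := by
  have hle := nEdges_le_pVal hfin
  rcases hp : X.pVal with _ | q <;> rw [hp] at hle hdim
  · exact ⟨0, a, vert_obj_zero 0 a, starSurjective_of_nEdges_eq_zero hfin (Nat.le_zero.mp (hle a))⟩
  · obtain ⟨z, hz⟩ := exists_nonDeg_of_isSkeletal hdim.1 (hdim.2 q q.lt_succ_self)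
    obtain ⟨z', hz', rfl⟩ := exists_nonDeg_vert_eq hX hconn hfin hle hz a
    exact ⟨q + 1, z', rfl, hz'.starSurjective hX hfin (hle _)⟩

theorem StarSurjective.exists_edge_eq {m : ℕ} {z : X.obj m} (hz : StarSurjective z) {n : ℕ}
    (c : Fin (n + 1)) (g : Fin (n + 1) → X.obj 1) (hg : ∀ j, X.edgeDom (g j) = X.vert 0 z) :
    ∃ x : X.obj n, ∀ j ≠ c, X.edge c j x = g j := by
  choose β hβ using fun j => hz (g j) (hg j)
  refine ⟨X.act (Function.update β c 0) z, fun j hj => ?_⟩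
  rw [edge_act, Function.update_self, Function.update_of_ne hj, hβ]

/-- The spine data `E` are given in both orientations, so that removing a leaf needs no case
split on the order of its endpoints. -/
theorem exists_edge_eq_of_isTree (hX : X.Spiny)
    (hstar : ∀ a : X.obj 0, ∃ (m : ℕ) (z : X.obj m), X.vert 0 z = a ∧ StarSurjective z) :
    ∀ {n : ℕ} (T : SimpleGraph (Fin (n + 1))), T.IsTree →
      ∀ (E : ∀ i j, T.Adj i j → X.obj 1) (v : Fin (n + 1) → X.obj 0),
        (∀ i j h, X.edgeDom (E i j h) = v i) → (∀ i j h, E j i h.symm = X.rev (E i j h)) →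
        ∃ x : X.obj n, (∀ i j h, X.edge i j x = E i j h) ∧ ∀ i, X.vert i x = v i
  | 0, _, _, _, v, _, _ =>
    ⟨v 0, fun i j h => absurd (Subsingleton.elim (α := Fin 1) i j) h.ne,
      fun i => by rw [Subsingleton.elim (α := Fin 1) i 0, vert_obj_zero]⟩
  | n + 1, T, hT, E, v, hdom, hsymm => by
    classical
    obtain ⟨l, hl⟩ := hT.exists_vert_degree_one_of_nontrivial
    obtain ⟨u, hlu, hu⟩ := SimpleGraph.degree_eq_one_iff_existsUnique_adj.mp hl
    obtain ⟨u, rfl⟩ := Fin.exists_succAbove_eq hlu.ne'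
    obtain ⟨x, hxE, hxv⟩ := exists_edge_eq_of_isTree hX hstar (T.comap l.succAbove)
      (hT.comap_succAbove hl) (fun i j h => E _ _ h) (v ∘ l.succAbove)
      (fun i j h => hdom _ _ h) (fun i j h => hsymm _ _ h)
    obtain ⟨m, z, hz, hzs⟩ := hstar (v (l.succAbove u))
    -- extend `x` by the leaf `l`: fill the star at `u` made of the edges of `x` and `E u l`
    obtain ⟨y, hy⟩ := hzs.exists_edge_eq (l.succAbove u)
      (Fin.insertNth l (E _ l hlu.symm) fun k => X.edge u k x) fun j => by
        cases j using Fin.succAboveCases l with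
        | x => rw [Fin.insertNth_apply_same, hdom, hz]
        | p k => rw [Fin.insertNth_apply_succAbove, edgeDom_edge, hxv, hz]; rfl
    have hyl : X.edge (l.succAbove u) l y = E _ l hlu.symm := by
      simpa using hy l hlu.ne
    have hly : X.edge l (l.succAbove u) y = E l _ hlu := by
      rw [← rev_edge, hyl, ← hsymm]
    have hrestr : X.act l.succAbove y = x := hX.ext_edge u fun k => by
      rcases eq_or_ne k u with rfl | hk
      · rw [edge_self, edge_self, vert_act, ← edgeDom_edge _ l, hyl, hdom, hxv]; rfl
      · rw [edge_act, hy _ (Fin.succAbove_right_injective.ne hk), Fin.insertNth_apply_succAbove]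
    refine ⟨y, fun i j h => ?_, fun i => ?_⟩
    · cases i using Fin.succAboveCases l with
      | x =>
        obtain rfl := hu j h
        exact hly
      | p i =>
        cases j using Fin.succAboveCases l with
        | x =>
          obtain rfl := Fin.succAbove_right_injective (hu _ h.symm)
          exact hyl
        | p j =>
          rw [← edge_act, hrestr]
          exact hxE i j h
    · cases i using Fin.succAboveCases l with
      | x => rw [← edgeDom_edge l (l.succAbove u), hly, hdom]
      | p i => rw [← vert_act, hrestr, hxv]; rfl

theorem spineMap_surjective (hX : X.Spiny)
    (hstar : ∀ a : X.obj 0, ∃ (m : ℕ) (z : X.obj m), X.vert 0 z = a ∧ StarSurjective z)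
    {n : ℕ} (T : SimpleGraph (Fin (n + 1))) (hT : T.IsTree) : (X.spineMap T).Surjective := by
  rintro ⟨e, v, hv⟩
  let E : ∀ i j, T.Adj i j → X.obj 1 := fun i j h =>
    if hij : i < j then e i j hij h else X.rev (e j i (h.ne.symm.lt_of_le (not_lt.mp hij)) h.symm)
  have hdom : ∀ i j h, X.edgeDom (E i j h) = v i := fun i j h => by
    by_cases hij : i < j
    · simp only [E, dif_pos hij, (hv i j hij h).1]
    · simp only [E, dif_neg hij, edgeDom_rev, (hv j i _ h.symm).2]
  have hsymm : ∀ i j h, E j i h.symm = X.rev (E i j h) := fun i j h => by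
    rcases lt_or_gt_of_ne h.ne with hij | hji
    · simp only [E, dif_pos hij, dif_neg (lt_asymm hij)]
    · simp only [E, dif_pos hji, dif_neg (lt_asymm hji), rev_rev]
  obtain ⟨x, hxE, -⟩ := exists_edge_eq_of_isTree hX hstar T hT E v hdom hsymm
  refine ⟨x, Subtype.ext (funext fun i => funext fun j => funext fun hij => funext fun h => ?_)⟩
  exact (hxE i j h).trans (dif_pos hij)

end SymSet

/-- a connected finite partial groupoid of dimension `p(X)` is a
groupoid. -/
theorem stmt13 (X : SymSet) (hX : X.Spiny) (hconn : X.Connected)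
    (hfin : Finite (X.obj 1)) (hdim : X.HasDim X.pVal) : X.IsGroupoid :=
  fun n hn T hT => ⟨hX n hn T hT,
    SymSet.spineMap_surjective hX (SymSet.exists_starSurjective hX hconn hfin hdim) T hT⟩
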